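/- Let M be a matrix over {1, 0', 0*} in which every 0* entry (i,j) has some column j' > j with M[i,j'] = 1 and some row i' < i with M[i',j] = 1. If M contains rows i1 < i2 and columns j1 < j2 with M[i1,j1] = 0*, M[i2,j2] = 0*, and M[i1,j2] = M[i2,j1] = 1, then the 0/1 matrix obtained by mapping 1 ↦ 1 and 0', 0* ↦ 0 contains the pattern Δ = [[1,*,*],[0,1,*],[1,0,1]]. -/
import Mathlib


/-- The three possible entries of the relabeled matrix: 1, 0' (plain zero), 0* (starred zero). -/
inductive Entry where
  | one : Entry
  | zeroP : Entry  -- 0'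
  | zeroS : Entry  -- 0*
deriving DecidableEq

open Entry in
theorem stmt_19 (m n : ℕ) (M : Fin m → Fin n → Entry)
    (hwit : ∀ i j, M i j = zeroS →
      (∃ j' : Fin n, j < j' ∧ M i j' = one) ∧ (∃ i' : Fin m, i' < i ∧ M i' j = one))
    (i1 i2 : Fin m) (j1 j2 : Fin n) (hi : i1 < i2) (hj : j1 < j2)
    (h11 : M i1 j1 = zeroS) (h22 : M i2 j2 = zeroS)
    (h12 : M i1 j2 = one) (h21 : M i2 j1 = one) :
    -- the 0/1 matrix (1 ↦ 1, 0'/0* ↦ 0) contains Δ = [[1,*,*],[0,1,*],[1,0,1]]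
    ∃ (a1 a2 a3 : Fin m) (b1 b2 b3 : Fin n),
      a1 < a2 ∧ a2 < a3 ∧ b1 < b2 ∧ b2 < b3 ∧
      M a1 b1 = one ∧ M a2 b1 ≠ one ∧ M a2 b2 = one ∧
      M a3 b1 = one ∧ M a3 b2 ≠ one ∧ M a3 b3 = one := by
  obtain ⟨-, i0, hi0, hi0v⟩ := hwit i1 j1 h11
  obtain ⟨⟨j3, hj3, hj3v⟩, -⟩ := hwit i2 j2 h22
  exact ⟨i0, i1, i2, j1, j2, j3, hi0, hi, hj, hj3, hi0v,
    by simp [h11], h12, h21, by simp [h22], hj3v⟩
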